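/- arXiv:math/0501427 — 3 statements merged into one kernel-verified Lean document; each statement's English description precedes it below -/
import Mathlib

section
/- Let G be a simple graph and v a vertex of G of degree at most 5. Suppose there do NOT exist five distinct neighbors v1, v2, v3, v4, v5 of v together with, for each pair i < j in {1,...,5}, a path P_{ij} in G - v from v_i to v_j, such that: (i) the ten paths P_{ij} are pairwise edge-disjoint; (ii) whenever {i,j} and {k,l} are disjoint pairs, the paths P_{ij} and P_{kl} are vertex-disjoint; and (iii) for every k not in {i,j}, the path P_{ij} avoids the vertex v_k (and all paths avoid v). If the vertex-deleted subgraph G - v is 5-colorable, then G is 5-colorable. -/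
/-!
Colour `G - v` with five colours. If some colour is missing on the at most five neighbours of
`v`, give it to `v`. Otherwise the neighbours `v₁, …, v₅` of `v` carry the five colours exactly
once, `vᵢ` coloured `i`. If for some `i, j` the vertices `vᵢ, vⱼ` lie in different `{i, j}`-Kempe
chains, swapping `i` and `j` on the chain of `vᵢ` frees the colour `i` at `v`. If not, paths
inside the ten Kempe chains form a `v`-immersion of `K₆`: a chain coloured `{i, j}` meets no
other `vₖ`, meets no chain whose colour pair is disjoint from `{i, j}`, and shares no edge with
another chain, since the colours at the ends of an edge determine the pair.
-/

/-- A `v`-immersion of `K₆` into `G`: five distinct neighbors of `v` together with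
paths between them in `G - v` (paths avoiding `v`) that are pairwise edge-disjoint,
vertex-disjoint when the index pairs are disjoint, and each avoiding the branch
vertices not among its own endpoints. -/
def VImmersionK6 {V : Type*} (G : SimpleGraph V) (v : V) : Prop :=
  ∃ f : Fin 5 → V, Function.Injective f ∧ (∀ i, G.Adj v (f i)) ∧
    ∃ P : ∀ i j : Fin 5, G.Walk (f i) (f j),
      (∀ i j, i ≠ j → (P i j).IsPath) ∧
      (∀ i j, i ≠ j → v ∉ (P i j).support) ∧
      (∀ i j k, i ≠ j → k ≠ i → k ≠ j → f k ∉ (P i j).support) ∧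
      (∀ i j k l, i ≠ j → k ≠ l → ({i, j} : Finset (Fin 5)) ≠ {k, l} →
        ∀ e ∈ (P i j).edges, e ∉ (P k l).edges) ∧
      (∀ i j k l, i ≠ j → k ≠ l →
        Disjoint ({i, j} : Finset (Fin 5)) ({k, l} : Finset (Fin 5)) →
        ∀ x ∈ (P i j).support, x ∉ (P k l).support)

lemma Equiv.swap_apply_mem_pair {α : Type*} [DecidableEq α] {a b c : α}
    (hc : c ∈ ({a, b} : Set α)) : Equiv.swap a b c ∈ ({a, b} : Set α) := by
  rcases hc with rfl | rfl <;> simp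

namespace SimpleGraph

variable {V α : Type*} {G : SimpleGraph V}

namespace Coloring

/-- The Kempe chains of the colours `a` and `b` are the components of this graph. -/
def kempeGraph (C : G.Coloring α) (a b : α) : SimpleGraph V where
  Adj x y := G.Adj x y ∧ C x ∈ ({a, b} : Set α) ∧ C y ∈ ({a, b} : Set α)
  symm := ⟨fun _ _ h => ⟨h.1.symm, h.2.2, h.2.1⟩⟩

variable (C : G.Coloring α) {a b : α}

lemma kempeGraph_le : C.kempeGraph a b ≤ G := fun _ _ h => h.1

lemma mem_pair_of_mem_kempeGraph_support {x : V} (hx : x ∈ (C.kempeGraph a b).support) :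
    C x ∈ ({a, b} : Set α) := by
  obtain ⟨_, h⟩ := hx
  exact h.2.1

lemma pair_eq_of_kempeGraph_adj {x y : V} (h : (C.kempeGraph a b).Adj x y) :
    ({C x, C y} : Set α) = {a, b} := by
  obtain ⟨hxy, hx, hy⟩ := h
  have hne := C.valid hxy
  rcases hx with hx | hx <;> rcases hy with hy | hy <;>
    simp_all [Set.pair_comm]

variable [DecidableEq α]

open Classical in
noncomputable def kempeSwap (a b : α) (u : V) : G.Coloring α :=
  Coloring.mk
    (fun x => if (C.kempeGraph a b).Reachable u x then Equiv.swap a b (C x) else C x) <| by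
    have hmixed : ∀ {x y}, G.Adj x y → (C.kempeGraph a b).Reachable u x →
        ¬ (C.kempeGraph a b).Reachable u y → Equiv.swap a b (C x) ≠ C y := by
      intro x y hxy hx hy heq
      by_cases hxab : C x ∈ ({a, b} : Set α)
      · exact hy (hx.trans (Adj.reachable ⟨hxy, hxab, heq ▸ Equiv.swap_apply_mem_pair hxab⟩))
      · refine C.valid hxy (Eq.trans ?_ heq)
        exact (Equiv.swap_apply_of_ne_of_ne (fun h => hxab (.inl h))
          (fun h => hxab (.inr h))).symm
    intro x y hxy
    by_cases hx : (C.kempeGraph a b).Reachable u x <;>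
      by_cases hy : (C.kempeGraph a b).Reachable u y <;> simp only [hx, hy, if_true, if_false]
    · exact (Equiv.swap a b).injective.ne (C.valid hxy)
    · exact hmixed hxy hx hy
    · exact (hmixed hxy.symm hy hx).symm
    · exact C.valid hxy

lemma kempeSwap_apply_of_reachable {u x : V} (h : (C.kempeGraph a b).Reachable u x) :
    C.kempeSwap a b u x = Equiv.swap a b (C x) :=
  if_pos h

lemma kempeSwap_apply_of_not_reachable {u x : V} (h : ¬ (C.kempeGraph a b).Reachable u x) :
    C.kempeSwap a b u x = C x :=
  if_neg h

lemma kempeSwap_ne_left_of_injOn {s : Set V} (hinj : s.InjOn C) {x y : V} (hx : x ∈ s)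
    (hy : y ∈ s) (hxa : C x = a) (hyb : C y = b) (hxy : ¬ (C.kempeGraph a b).Reachable x y)
    {u : V} (hu : u ∈ s) : C.kempeSwap a b x u ≠ a := by
  by_cases hr : (C.kempeGraph a b).Reachable x u
  · rw [C.kempeSwap_apply_of_reachable hr, Ne, Equiv.swap_apply_eq_iff, Equiv.swap_apply_left]
    intro hub
    obtain rfl := hinj hu hy (hub.trans hyb.symm)
    exact hxy hr
  · rw [C.kempeSwap_apply_of_not_reachable hr]
    intro hua
    obtain rfl := hinj hx hu (hxa.trans hua.symm)
    exact hr (Reachable.refl _)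

end Coloring

variable {v : V}

lemma ne_of_mem_support_deleteIncidenceSet {x : V} (hx : x ∈ (G.deleteIncidenceSet v).support) :
    x ≠ v := by
  obtain ⟨_, h⟩ := hx
  exact (deleteIncidenceSet_adj.1 h).2.1

lemma colorable_deleteIncidenceSet_of_colorable_induce {n : ℕ}
    (h : (G.induce {u | u ≠ v}).Colorable n) (hn : n ≠ 0) :
    (G.deleteIncidenceSet v).Colorable n := by
  classical
  obtain ⟨C⟩ := h
  refine ⟨Coloring.mk (fun x => if hx : x = v then ⟨0, Nat.pos_of_ne_zero hn⟩ else C ⟨x, hx⟩) ?_⟩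
  intro x y hxy
  obtain ⟨hxy, hx, hy⟩ := deleteIncidenceSet_adj.1 hxy
  simpa [hx, hy] using C.valid (show (G.induce {u | u ≠ v}).Adj ⟨x, hx⟩ ⟨y, hy⟩ from hxy)

lemma colorable_of_coloring_deleteIncidenceSet {n : ℕ}
    (C : (G.deleteIncidenceSet v).Coloring (Fin n)) (a : Fin n) (ha : ∀ u, G.Adj v u → C u ≠ a) :
    G.Colorable n := by
  classical
  refine ⟨Coloring.mk (fun x => if x = v then a else C x) ?_⟩
  intro x y hxy
  by_cases hx : x = v <;> by_cases hy : y = v <;> simp only [hx, hy, if_true, if_false]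
  · subst hx hy; exact (G.irrefl hxy).elim
  · exact (ha y (hx ▸ hxy)).symm
  · exact ha x (hy ▸ hxy.symm)
  · exact C.valid (deleteIncidenceSet_adj.2 ⟨hxy, hx, hy⟩)

theorem vImmersionK6_of_kempeGraph_reachable (C : (G.deleteIncidenceSet v).Coloring (Fin 5))
    {f : Fin 5 → V} (hadj : ∀ i, G.Adj v (f i)) (hf : ∀ i, C (f i) = i)
    (hreach : ∀ i j, (C.kempeGraph i j).Reachable (f i) (f j)) : VImmersionK6 G v := by
  have hinj : Function.Injective f := Function.LeftInverse.injective hf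
  choose Q hQ using fun i j => (hreach i j).exists_isPath
  have hle : ∀ i j, C.kempeGraph i j ≤ G := fun i j =>
    C.kempeGraph_le.trans (G.deleteIncidenceSet_le v)
  let P i j := (Q i j).mapLe (hle i j)
  have hsupp : ∀ i j, i ≠ j → ∀ x ∈ (P i j).support, x ≠ v ∧ C x ∈ ({i, j} : Set (Fin 5)) := by
    intro i j hij x hx
    rw [Walk.support_mapLe_eq_support] at hx
    have hx' := mem_support_of_mem_walk_support (Q i j) (Walk.not_nil_of_ne (hinj.ne hij)) hx
    exact ⟨ne_of_mem_support_deleteIncidenceSet (support_mono C.kempeGraph_le hx'),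
      C.mem_pair_of_mem_kempeGraph_support hx'⟩
  have hedge : ∀ i j x y, s(x, y) ∈ (P i j).edges → ({C x, C y} : Set (Fin 5)) = {i, j} := by
    intro i j x y he
    rw [Walk.edges_mapLe_eq_edges] at he
    exact C.pair_eq_of_kempeGraph_adj ((Q i j).adj_of_mem_edges he)
  refine ⟨f, hinj, hadj, P, fun i j _ => (Walk.isPath_mapLe _).2 (hQ i j),
    fun i j hij hv => (hsupp i j hij v hv).1 rfl, ?_, ?_, ?_⟩
  · intro i j k hij hki hkj hk
    have hk' := (hsupp i j hij _ hk).2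
    rw [hf k] at hk'
    rcases hk' with h | h
    exacts [hki h, hkj h]
  · intro i j k l _ _ hne e he1 he2
    induction e using Sym2.ind with
    | h x y =>
      refine hne (Finset.coe_inj.1 ?_)
      push_cast
      rw [← hedge _ _ _ _ he1, hedge _ _ _ _ he2]
  · intro i j k l hij hkl hdisj x hx1 hx2
    have hdisj' : Disjoint ({i, j} : Set (Fin 5)) {k, l} := by
      simpa only [Finset.coe_pair] using Finset.disjoint_coe.2 hdisj
    exact hdisj'.notMem_of_mem_left (hsupp i j hij x hx1).2 (hsupp k l hkl x hx2).2

end SimpleGraph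

theorem stmt0 {V : Type*} (G : SimpleGraph V) (v : V)
    [Fintype (G.neighborSet v)]
    (hdeg : G.degree v ≤ 5)
    (h : ¬ VImmersionK6 G v)
    (hcol : (G.induce {u | u ≠ v}).Colorable 5) :
    G.Colorable 5 := by
  classical
  obtain ⟨C⟩ := SimpleGraph.colorable_deleteIncidenceSet_of_colorable_induce hcol (by norm_num)
  by_cases hfree : ∃ a, ∀ u, G.Adj v u → C u ≠ a
  · obtain ⟨a, ha⟩ := hfree
    exact SimpleGraph.colorable_of_coloring_deleteIncidenceSet C a ha
  push Not at hfree
  choose f hfadj hf using hfree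
  have hinj : Set.InjOn C (G.neighborFinset v) :=
    Finset.injOn_of_surjOn_of_card_le C (t := Finset.univ) (fun _ _ => by simp)
      (fun i _ => ⟨f i, by simpa using hfadj i, hf i⟩) (by simpa using hdeg)
  by_cases hreach : ∀ i j, (C.kempeGraph i j).Reachable (f i) (f j)
  · exact absurd (SimpleGraph.vImmersionK6_of_kempeGraph_reachable C hfadj hf hreach) h
  push Not at hreach
  obtain ⟨a, b, hab⟩ := hreach
  have hmem : ∀ {u}, G.Adj v u → u ∈ (G.neighborFinset v : Set V) := by simp
  exact SimpleGraph.colorable_of_coloring_deleteIncidenceSet (C.kempeSwap a b (f a)) a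
    fun u hu => C.kempeSwap_ne_left_of_injOn hinj (hmem (hfadj a)) (hmem (hfadj b)) (hf a) (hf b)
      hab (hmem hu)
end

section
/- Let G be a simple graph, v a vertex of G of degree exactly 5 with neighbors v1, v2, v3, v4, v5, and let c be a proper 5-coloring of G - v that assigns color i to v_i for each i in {1,...,5}. If for some pair of distinct colors i and j the vertices v_i and v_j lie in different connected components of the subgraph of G - v induced by the vertices colored i or j by c, then G is 5-colorable. -/
theorem stmt1 {V : Type*} (G : SimpleGraph V) (v : V)
    [Fintype (G.neighborSet v)]
    (f : Fin 5 → V) (hf : Function.Injective f)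
    (hnbr : G.neighborSet v = Set.range f)
    -- `c` is a proper 5-coloring of `G - v` assigning color `i` to `f i`
    (c : V → Fin 5)
    (hc : ∀ x y, G.Adj x y → x ≠ v → y ≠ v → c x ≠ c y)
    (hcf : ∀ i, c (f i) = i)
    -- some `f i` and `f j` lie in different components of the Kempe subgraph
    (i j : Fin 5) (hij : i ≠ j)
    (hsep : ¬ (SimpleGraph.fromRel (fun x y =>
        G.Adj x y ∧ x ≠ v ∧ y ≠ v ∧
          (c x = i ∨ c x = j) ∧ (c y = i ∨ c y = j))).Reachable (f i) (f j)) :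
    G.Colorable 5 := by
  classical
  set r : V → V → Prop := fun x y =>
    G.Adj x y ∧ x ≠ v ∧ y ≠ v ∧ (c x = i ∨ c x = j) ∧ (c y = i ∨ c y = j) with hr
  set H : SimpleGraph V := SimpleGraph.fromRel r with hH
  -- endpoints of walks in H (other than the start) have color i or j
  have hwalk : ∀ (a x : V) (_ : H.Walk a x), x = a ∨ (c x = i ∨ c x = j) := by
    intro a x w
    induction w with
    | nil => exact Or.inl rfl
    | @cons a b x h p ih =>
      rcases ih with rfl | hcond
      · right
        rw [hH, SimpleGraph.fromRel_adj] at h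
        rcases h.2 with h' | h'
        · exact h'.2.2.2.2
        · exact h'.2.2.2.1
      · exact Or.inr hcond
  have hcomp : ∀ x, H.Reachable (f i) x → c x = i ∨ c x = j := by
    intro x hx
    obtain ⟨w⟩ := hx
    rcases hwalk _ _ w with rfl | h
    · exact Or.inl (hcf i)
    · exact h
  -- the new coloring
  set c' : V → Fin 5 := fun x =>
    if x = v then i else if H.Reachable (f i) x then Equiv.swap i j (c x) else c x with hc'
  have hc'v : c' v = i := by simp [hc']
  have hc'ne : ∀ x, x ≠ v → c' x =
      (if H.Reachable (f i) x then Equiv.swap i j (c x) else c x) := by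
    intro x hx; simp [hc', hx]
  -- neighbors of v don't get color i
  have hnbri : ∀ y, G.Adj v y → c' y ≠ i := by
    intro y hy
    have hyv : y ≠ v := fun h => (G.irrefl (h ▸ hy))
    have : y ∈ Set.range f := by rw [← hnbr]; exact hy
    obtain ⟨k, rfl⟩ := this
    rw [hc'ne _ hyv]
    by_cases hk : k = i
    · subst hk
      rw [if_pos (SimpleGraph.Reachable.refl _), hcf, Equiv.swap_apply_left]
      exact hij.symm
    · by_cases hkj : k = j
      · subst hkj
        rw [if_neg hsep, hcf]
        exact hij.symm
      · rw [if_neg, hcf]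
        · exact hk
        · intro hR
          rcases hcomp _ hR with h | h <;> rw [hcf] at h
          · exact hk h
          · exact hkj h
  have hvalid : ∀ {a b : V}, G.Adj a b → c' a ≠ c' b := by
    intro a b hab
    by_cases hav : a = v
    · subst hav
      rw [hc'v]
      exact fun h => hnbri b hab h.symm
    · by_cases hbv : b = v
      · subst hbv
        rw [hc'v]
        exact hnbri a hab.symm
      · rw [hc'ne _ hav, hc'ne _ hbv]
        have hcab : c a ≠ c b := hc a b hab hav hbv
        by_cases hRa : H.Reachable (f i) a
        · by_cases hRb : H.Reachable (f i) b
          · rw [if_pos hRa, if_pos hRb]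
            exact fun h => hcab ((Equiv.swap i j).injective h)
          · rw [if_pos hRa, if_neg hRb]
            -- a, b not adjacent in H
            have hnadj : ¬ H.Adj a b := fun h => hRb (hRa.trans ⟨h.toWalk⟩)
            rw [hH, SimpleGraph.fromRel_adj] at hnadj
            push_neg at hnadj
            have h2 := hnadj hab.ne
            by_cases hca : c a = i ∨ c a = j
            · have hcb : ¬ (c b = i ∨ c b = j) := by
                intro hcb
                exact h2.1 ⟨hab, hav, hbv, hca, hcb⟩
              push_neg at hcb
              rcases hca with h | h <;> rw [h]
              · rw [Equiv.swap_apply_left]; exact fun h' => hcb.2 h'.symm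
              · rw [Equiv.swap_apply_right]; exact fun h' => hcb.1 h'.symm
            · push_neg at hca
              rw [Equiv.swap_apply_of_ne_of_ne hca.1 hca.2]
              exact hcab
        · by_cases hRb : H.Reachable (f i) b
          · rw [if_neg hRa, if_pos hRb]
            have hnadj : ¬ H.Adj b a := fun h => hRa (hRb.trans ⟨h.toWalk⟩)
            rw [hH, SimpleGraph.fromRel_adj] at hnadj
            push_neg at hnadj
            have h2 := hnadj hab.ne'
            by_cases hcb : c b = i ∨ c b = j
            · have hca : ¬ (c a = i ∨ c a = j) := by
                intro hca
                exact h2.1 ⟨hab.symm, hbv, hav, hcb, hca⟩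
              push_neg at hca
              rcases hcb with h | h <;> rw [h]
              · rw [Equiv.swap_apply_left]; exact hca.2
              · rw [Equiv.swap_apply_right]; exact hca.1
            · push_neg at hcb
              rw [Equiv.swap_apply_of_ne_of_ne hcb.1 hcb.2]
              exact hcab
          · rw [if_neg hRa, if_neg hRb]
            exact hcab
  exact ⟨SimpleGraph.Coloring.mk c' hvalid⟩
end

section
/- Let G be a simple graph that is not 5-colorable, let v be a vertex of G of degree at most 5, and suppose G - v admits a proper 5-coloring c. Then v has degree exactly 5, its five neighbors v1, ..., v5 receive five pairwise distinct colors under c, and for every pair of distinct indices i, j there exists a path in G - v from v_i to v_j all of whose vertices are colored i or j by c (with consecutive vertices alternating between the two colors). Consequently there exist, for each pair i < j, such paths P_{ij} that are pairwise edge-disjoint, with P_{ij} and P_{kl} vertex-disjoint whenever {i,j} and {k,l} are disjoint, and with P_{ij} avoiding v and every v_k with k not in {i,j}; that is, there is a v-immersion of K6 into G. -/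
namespace SimpleGraph

variable {V α : Type*} {G : SimpleGraph V} {v : V} {c : V → α}

/-- The connected components of this graph are the `(i, j)`-Kempe chains of `c` on `G - v`. -/
def kempeGraph (G : SimpleGraph V) (v : V) (c : V → α) (i j : α) : SimpleGraph V where
  Adj x y := G.Adj x y ∧ x ≠ v ∧ y ≠ v ∧ (c x = i ∨ c x = j) ∧ (c y = i ∨ c y = j)
  symm := ⟨fun _ _ ⟨hxy, hx, hy, hcx, hcy⟩ => ⟨hxy.symm, hy, hx, hcy, hcx⟩⟩
  loopless := ⟨fun _ h => G.irrefl h.1⟩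

theorem kempeGraph_adj {i j : α} {x y : V} :
    (G.kempeGraph v c i j).Adj x y ↔
      G.Adj x y ∧ x ≠ v ∧ y ≠ v ∧ (c x = i ∨ c x = j) ∧ (c y = i ∨ c y = j) :=
  Iff.rfl

theorem kempeGraph_le (i j : α) : G.kempeGraph v c i j ≤ G :=
  fun _ _ h => (kempeGraph_adj.1 h).1

theorem kempeGraph.mem_of_reachable {i j : α} {a x : V} (ha : a ≠ v) (hca : c a = i ∨ c a = j)
    (h : (G.kempeGraph v c i j).Reachable a x) : x ≠ v ∧ (c x = i ∨ c x = j) := by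
  obtain ⟨p⟩ := h.symm
  cases p with
  | nil => exact ⟨ha, hca⟩
  | cons h _ => exact ⟨(kempeGraph_adj.1 h).2.1, (kempeGraph_adj.1 h).2.2.2.1⟩

def Coloring.extend [DecidableEq V] (hc : ∀ x y, G.Adj x y → x ≠ v → y ≠ v → c x ≠ c y) (a : α)
    (ha : ∀ u, G.Adj v u → c u ≠ a) : G.Coloring α :=
  Coloring.mk (Function.update c v a) fun {x y} hxy => by
    by_cases hx : x = v
    · subst hx
      simpa [Function.update_of_ne hxy.ne'] using (ha y hxy).symm
    by_cases hy : y = v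
    · subst hy
      simpa [Function.update_of_ne hx] using ha x hxy.symm
    simpa [Function.update_of_ne hx, Function.update_of_ne hy] using hc x y hxy hx hy

theorem kempeSwap_proper [DecidableEq α] (hc : ∀ x y, G.Adj x y → x ≠ v → y ≠ v → c x ≠ c y)
    {i j : α} (K : V → Prop) [DecidablePred K]
    (hK : ∀ x y, (G.kempeGraph v c i j).Adj x y → K x → K y) :
    ∀ x y, G.Adj x y → x ≠ v → y ≠ v →
      (if K x then Equiv.swap i j (c x) else c x) ≠
        (if K y then Equiv.swap i j (c y) else c y) := by
  have boundary : ∀ x y, G.Adj x y → x ≠ v → y ≠ v → K x → ¬ K y →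
      Equiv.swap i j (c x) ≠ c y := by
    intro x y hxy hx hy hKx hKy hxy'
    by_cases hcx : c x = i ∨ c x = j
    · have hcy : c y = i ∨ c y = j := by
        rcases hcx with h | h <;> simp [h, ← hxy']
      exact hKy (hK x y (kempeGraph_adj.2 ⟨hxy, hx, hy, hcx, hcy⟩) hKx)
    · rw [Equiv.swap_apply_of_ne_of_ne (not_or.1 hcx).1 (not_or.1 hcx).2] at hxy'
      exact hc x y hxy hx hy hxy'
  intro x y hxy hx hy
  by_cases hKx : K x <;> by_cases hKy : K y <;> simp only [hKx, hKy, if_true, if_false]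
  · exact (Equiv.injective _).ne (hc x y hxy hx hy)
  · exact boundary x y hxy hx hy hKx hKy
  · exact (boundary y x hxy.symm hy hx hKy hKx).symm
  · exact hc x y hxy hx hy

/-- Were `b` not in the Kempe chain of `a`, swapping `i` and `j` on that chain would free the
colour `i` at `v`. -/
theorem kempeGraph_reachable [DecidableEq α] (hc : ∀ x y, G.Adj x y → x ≠ v → y ≠ v → c x ≠ c y)
    (hcol : IsEmpty (G.Coloring α)) {i j : α} {a b : V}
    (ha : ∀ u, G.Adj v u → c u = i → u = a) (hb : ∀ u, G.Adj v u → c u = j → u = b) :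
    (G.kempeGraph v c i j).Reachable a b := by
  classical
  by_contra hab
  set K := (G.kempeGraph v c i j).Reachable a
  have hc' := kempeSwap_proper hc K fun x y hxy hx => hx.trans hxy.reachable
  refine hcol.false (Coloring.extend hc' i fun u hu hui => ?_)
  by_cases hKu : K u
  · rw [if_pos hKu, Equiv.swap_apply_eq_iff, Equiv.swap_apply_left] at hui
    exact hab (hb u hu hui ▸ hKu)
  · rw [if_neg hKu] at hui
    exact hKu (ha u hu hui ▸ Reachable.refl a)

theorem exists_kempePath (hc : ∀ x y, G.Adj x y → x ≠ v → y ≠ v → c x ≠ c y) {i j : α}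
    {a b : V} (ha : a ≠ v) (hca : c a = i ∨ c a = j) (h : (G.kempeGraph v c i j).Reachable a b) :
    ∃ p : G.Walk a b, p.IsPath ∧ (∀ x ∈ p.support, x ≠ v ∧ (c x = i ∨ c x = j)) ∧
      p.support.IsChain (fun x y => c x ≠ c y) := by
  classical
  obtain ⟨q, hq⟩ := h.some.toPath
  refine ⟨q.mapLe (kempeGraph_le i j), hq.mapLe _, ?_, ?_⟩ <;> rw [Walk.support_mapLe_eq_support]
  · exact fun x hx => kempeGraph.mem_of_reachable ha hca ⟨q.takeUntil x hx⟩
  · refine q.isChain_adj_support.imp fun x y h => ?_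
    obtain ⟨hxy, hx, hy, _⟩ := kempeGraph_adj.1 h
    exact hc x y hxy hx hy

theorem surjective_domRestrict_neighborSet [DecidableEq V]
    (hc : ∀ x y, G.Adj x y → x ≠ v → y ≠ v → c x ≠ c y) (hcol : IsEmpty (G.Coloring α)) :
    Function.Surjective ((G.neighborSet v).domRestrict c) := by
  intro a
  by_contra! h
  exact hcol.false (Coloring.extend hc a fun u hu => h ⟨u, hu⟩)

theorem exists_neighbor_of_each_color [Fintype α] [Fintype (G.neighborSet v)]
    (hc : ∀ x y, G.Adj x y → x ≠ v → y ≠ v → c x ≠ c y) (hcol : IsEmpty (G.Coloring α))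
    (hdeg : G.degree v ≤ Fintype.card α) :
    G.degree v = Fintype.card α ∧ ∃ f : α → V, (∀ a, G.Adj v (f a)) ∧ (∀ a, c (f a) = a) ∧
      ∀ u, G.Adj v u → f (c u) = u := by
  classical
  have hsurj := surjective_domRestrict_neighborSet hc hcol
  have hcard : Fintype.card (G.neighborSet v) = Fintype.card α := by
    have := Fintype.card_le_of_surjective _ hsurj
    rw [card_neighborSet_eq_degree] at this ⊢
    omega
  let e := Equiv.ofBijective _ ((Fintype.bijective_iff_surjective_and_card _).2 ⟨hsurj, hcard⟩)
  refine ⟨card_neighborSet_eq_degree G v ▸ hcard, fun a => e.symm a, fun a => (e.symm a).2,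
    fun a => e.apply_symm_apply a, fun u hu => congrArg Subtype.val (e.symm_apply_apply ⟨u, hu⟩)⟩

theorem Walk.map_eq_of_mem_edges {i j : α} {a b : V}
    (hc : ∀ x y, G.Adj x y → x ≠ v → y ≠ v → c x ≠ c y) {p : G.Walk a b}
    (hp : ∀ x ∈ p.support, x ≠ v ∧ (c x = i ∨ c x = j)) {e : Sym2 V} (he : e ∈ p.edges) :
    e.map c = s(i, j) := by
  induction e with
  | _ x y =>
    have ⟨hx, hcx⟩ := hp x (p.fst_mem_support_of_mem_edges he)
    have ⟨hy, hcy⟩ := hp y (p.snd_mem_support_of_mem_edges he)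
    have hne := hc x y (p.edges_subset_edgeSet he) hx hy
    rw [Sym2.map_mk]
    rcases hcx with h1 | h1 <;> rcases hcy with h2 | h2 <;> simp_all [Sym2.eq_swap]

/-- Two of the paths share an edge only if their colour pairs agree, and a vertex only if their
colour pairs meet. -/
theorem vImmersionK6_of_kempePaths {c : V → Fin 5}
    (hc : ∀ x y, G.Adj x y → x ≠ v → y ≠ v → c x ≠ c y) {f : Fin 5 → V}
    (hfv : ∀ i, G.Adj v (f i)) (hcf : ∀ i, c (f i) = i)
    (P : ∀ i j, G.Walk (f i) (f j)) (hP : ∀ i j, (P i j).IsPath)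
    (hPc : ∀ i j, ∀ x ∈ (P i j).support, x ≠ v ∧ (c x = i ∨ c x = j)) :
    VImmersionK6 G v := by
  have hcolor : ∀ {i j x}, x ∈ (P i j).support → c x ∈ ({i, j} : Finset (Fin 5)) := fun hx => by
    simpa using (hPc _ _ _ hx).2
  refine ⟨f, Function.LeftInverse.injective hcf, hfv, P, fun i j _ => hP i j,
    fun i j _ hv => (hPc i j v hv).1 rfl, fun i j k _ hki hkj hk => ?_, ?_, ?_⟩
  · simpa [hcf, hki, hkj] using hcolor hk
  · intro i j k l _ _ hne e he he'
    have := (Walk.map_eq_of_mem_edges hc (hPc i j) he).symm.trans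
      (Walk.map_eq_of_mem_edges hc (hPc k l) he')
    rcases Sym2.eq_iff.1 this with ⟨rfl, rfl⟩ | ⟨rfl, rfl⟩
    · exact hne rfl
    · exact hne (Finset.pair_comm _ _)
  · exact fun i j k l _ _ hdisj x hx hx' =>
      Finset.disjoint_left.1 hdisj (hcolor hx) (hcolor hx')

end SimpleGraph

open SimpleGraph

theorem stmt2 {V : Type*} (G : SimpleGraph V) (v : V)
    [Fintype (G.neighborSet v)]
    (hnc : ¬ G.Colorable 5)
    (hdeg : G.degree v ≤ 5)
    -- `c` is a proper 5-coloring of `G - v`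
    (c : V → Fin 5)
    (hc : ∀ x y, G.Adj x y → x ≠ v → y ≠ v → c x ≠ c y) :
    G.degree v = 5 ∧
    ∃ f : Fin 5 → V, Function.Injective f ∧ (∀ i, G.Adj v (f i)) ∧
      Function.Injective (fun i => c (f i)) ∧
      (∀ i j : Fin 5, i ≠ j → ∃ p : G.Walk (f i) (f j), p.IsPath ∧
        v ∉ p.support ∧
        (∀ x ∈ p.support, c x = c (f i) ∨ c x = c (f j)) ∧
        p.support.Chain' (fun x y => c x ≠ c y)) ∧
      VImmersionK6 G v := by
  have hcol : IsEmpty (G.Coloring (Fin 5)) := not_nonempty_iff.1 hnc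
  obtain ⟨hdeg5, f, hfv, hcf, hfc⟩ :=
    exists_neighbor_of_each_color hc hcol (by simpa using hdeg)
  have hpaths (i j : Fin 5) := exists_kempePath hc (hfv i).ne' (Or.inl (hcf i))
    (kempeGraph_reachable (i := i) (j := j) hc hcol (fun u hu hui => hui ▸ (hfc u hu).symm)
      (fun u hu huj => huj ▸ (hfc u hu).symm))
  choose P hP hPc hPchain using hpaths
  refine ⟨by simpa using hdeg5, f, Function.LeftInverse.injective hcf, hfv,
    fun i j h => by simpa [hcf] using h,
    fun i j _ => ⟨P i j, hP i j, fun hv => (hPc i j v hv).1 rfl,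
      fun x hx => by simpa [hcf] using (hPc i j x hx).2, hPchain i j⟩,
    vImmersionK6_of_kempePaths hc hfv hcf P hP hPc⟩
end
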